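/- Assume Hypothesis 7.1 holds for the subset I ⊆ S. Let (l^(u))_{u ∈ U^I_min} be a family with l^(u) ∈ L_u for every u ∈ U^I_min. Then Σ_{u ∈ U^I_min} l^(u) = 0 in ℤ^N if and only if l^(u) = 0 for all u ∈ U^I_min. -/

import Mathlib

/-!
Only the columns `j = μ + κ(u)` of the family `l` can be nonzero: on every other column all
entries have one sign, and the columns sum to zero. What remains is a square matrix `M` with
nonnegative off-diagonal entries and zero row and column sums, each of whose rows is a relation
among the distinct points `a⁺_{μ+κ(u)}`. Weighting `M r r'` by the squared distance between
the `r`-th and `r'`-th points, the row relations make the total weight equal to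
`∑ r', (column sum r') · ‖point r'‖² = 0`, while every term is nonnegative; hence the
off-diagonal entries vanish, and then so do the diagonal ones.
-/

/-- `a_j⁺ = (a_{0j}, …, a_{nj}, 1) ∈ ℕ^{n+2}`. -/
def aplus {n N : ℕ} (a : Fin N → Fin (n + 1) → ℕ) (j : Fin N) : Fin (n + 2) → ℕ :=
  Fin.snoc (a j) 1

open Finset Matrix Function

section

variable {ι κ R : Type*} [Fintype ι] [Fintype κ] [CommRing R]

theorem Matrix.sum_mul_sum_sub_sq_eq {M : Matrix ι ι R} {U : Matrix ι κ R}
    (hrow : M *ᵥ 1 = 0) (hMU : M * U = 0) (r : ι) :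
    ∑ r', M r r' * ∑ i, (U r' i - U r i) ^ 2 = ∑ r', M r r' * ∑ i, U r' i ^ 2 := by
  have hrow' : ∑ r', M r r' = 0 := by simpa [mulVec, dotProduct] using congrFun hrow r
  have hMU' (i : κ) : ∑ r', M r r' * U r' i = 0 := by
    simpa [mul_apply] using congrFun (congrFun hMU r) i
  calc ∑ r', M r r' * ∑ i, (U r' i - U r i) ^ 2
      = ∑ i, (∑ r', M r r' * U r' i ^ 2 - 2 * U r i * ∑ r', M r r' * U r' i
          + U r i ^ 2 * ∑ r', M r r') := by
        simp only [mul_sum, ← sum_sub_distrib, ← sum_add_distrib]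
        rw [sum_comm]
        exact sum_congr rfl fun _ _ => sum_congr rfl fun _ _ => by ring
    _ = ∑ r', M r r' * ∑ i, U r' i ^ 2 := by
        simp only [hMU', hrow', mul_zero, sub_zero, add_zero]
        rw [sum_comm]
        simp only [mul_sum]

theorem Matrix.eq_zero_of_offDiag_nonneg_of_mul_eq_zero [LinearOrder R] [IsStrictOrderedRing R]
    {M : Matrix ι ι R} {U : Matrix ι κ R} (hU : Injective U)
    (hoff : ∀ r r', r ≠ r' → 0 ≤ M r r') (hrow : M *ᵥ 1 = 0) (hcol : 1 ᵥ* M = 0)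
    (hMU : M * U = 0) : M = 0 := by
  set E : ι → ι → R := fun r r' => M r r' * ∑ i, (U r' i - U r i) ^ 2
  have hE_nonneg (r r' : ι) : 0 ≤ E r r' := by
    by_cases h : r = r'
    · simp [E, h]
    · exact mul_nonneg (hoff r r' h) (sum_nonneg fun _ _ => sq_nonneg _)
  have hE_sum : ∑ r, ∑ r', E r r' = 0 := by
    have hcol' (r' : ι) : ∑ r, M r r' = 0 := by
      simpa [vecMul, dotProduct] using congrFun hcol r'
    simp only [E, sum_mul_sum_sub_sq_eq hrow hMU]
    rw [sum_comm]
    simp [← sum_mul, hcol']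
  have hE_zero (r r' : ι) : E r r' = 0 := by
    have := (Fintype.sum_eq_zero_iff_of_nonneg fun r => sum_nonneg fun r' _ => hE_nonneg r r').1
      hE_sum
    exact (Fintype.sum_eq_zero_iff_of_nonneg (hE_nonneg r)).1 (congrFun this r) |> (congrFun · r')
  have hoff_zero (r r' : ι) (h : r ≠ r') : M r r' = 0 := by
    refine (mul_eq_zero.1 (hE_zero r r')).resolve_right fun hd => h (hU ?_).symm
    funext i
    have := (Fintype.sum_eq_zero_iff_of_nonneg fun i => sq_nonneg (U r' i - U r i)).1 hd
    exact sub_eq_zero.1 (pow_eq_zero_iff two_ne_zero |>.1 (congrFun this i))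
  ext r r'
  by_cases h : r = r'
  · subst h
    have hrow' : ∑ r', M r r' = 0 := by simpa [mulVec, dotProduct] using congrFun hrow r
    rwa [sum_eq_single r (fun r' _ h => hoff_zero r r' (Ne.symm h)) (by simp)] at hrow'
  · exact hoff_zero r r' h

end

theorem eq_zero_of_sum_eq_zero_of_relations {ι α κ R : Type*} [Fintype ι] [Fintype α]
    [Fintype κ] [CommRing R] [LinearOrder R] [IsStrictOrderedRing R]
    (w : α → κ → R) (i₀ : κ) (hw : ∀ j, w j i₀ = 1) (e : ι → α) (he : Injective (w ∘ e))
    (l : ι → α → R) (hrel : ∀ r i, ∑ j, l r j * w j i = 0)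
    (hsign : ∀ j ∉ Set.range e, (∀ r, l r j ≤ 0) ∨ (∀ r, 0 ≤ l r j))
    (hoff : ∀ r r', r ≠ r' → 0 ≤ l r (e r')) (hsum : ∀ j, ∑ r, l r j = 0) :
    l = 0 := by
  have hcol_zero (j) (hj : j ∉ Set.range e) (r : ι) : l r j = 0 := by
    rcases hsign j hj with h | h
    · exact (Fintype.sum_eq_zero_iff_of_nonpos h).1 (hsum j) |> (congrFun · r)
    · exact (Fintype.sum_eq_zero_iff_of_nonneg h).1 (hsum j) |> (congrFun · r)
  have hrel' (r : ι) (i : κ) : ∑ r', l r (e r') * w (e r') i = 0 := by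
    rw [← hrel r i]
    exact Fintype.sum_of_injective e he.of_comp _ _ (fun j hj => by simp [hcol_zero j hj])
      fun _ => rfl
  set M : Matrix ι ι R := .of fun r r' => l r (e r')
  have hM : M = 0 := by
    refine eq_zero_of_offDiag_nonneg_of_mul_eq_zero (U := .of fun r => w (e r)) he hoff ?_ ?_ ?_
    · funext r; simpa [M, mulVec, dotProduct, hw] using hrel' r i₀
    · funext r'; simpa [M, vecMul, dotProduct] using hsum (e r')
    · ext r i; simpa [M, mul_apply] using hrel' r i
  funext r j
  by_cases hj : j ∈ Set.range e
  · obtain ⟨r', rfl⟩ := hj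
    exact congrFun (congrFun hM r) r'
  · exact hcol_zero j hj r

/-- `U^I_min` is enumerated by `umin : Fin m → ℕ^{n+2}`, Hypothesis 7.1 is encoded by `κ` and
`hκ`, and indices are 0-based, so `j ≤ μ_I` becomes `(j : ℕ) < μ`. -/
theorem stmt_13 (n N : ℕ)
    (a : Fin N → Fin (n + 1) → ℕ)
    (μ m : ℕ)
    (umin : Fin m → Fin (n + 2) → ℕ)
    (huinj : Function.Injective umin)
    (hNm : μ + m ≤ N)
    (κ : Fin m → Fin m)
    (hκ : ∀ r : Fin m, ∀ i : Fin (n + 2),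
      umin r i = aplus a ⟨μ + (κ r : ℕ), by have := (κ r).isLt; omega⟩ i +
        ∑ t : Fin μ, aplus a ⟨(t : ℕ), by have := t.isLt; omega⟩ i)
    (l : Fin m → Fin N → ℤ)
    (hl : ∀ r : Fin m,
      (∀ i : Fin (n + 2), ∑ j, l r j * (aplus a j i : ℤ) = 0) ∧
      (∀ j : Fin N, (j : ℕ) < μ → l r j ≤ 0) ∧
      (∀ j : Fin N, (j : ℕ) = μ + (κ r : ℕ) → l r j ≤ 0) ∧
      (∀ j : Fin N, ¬ (j : ℕ) < μ → (j : ℕ) ≠ μ + (κ r : ℕ) → 0 ≤ l r j)) :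
    (∀ j : Fin N, ∑ r : Fin m, l r j = 0) ↔ (∀ r : Fin m, l r = 0) := by
  refine ⟨fun hsum => ?_, fun h j => by simp [h]⟩
  let e (r : Fin m) : Fin N := ⟨μ + κ r, by have := (κ r).isLt; omega⟩
  let w (j : Fin N) (i : Fin (n + 2)) : ℤ := aplus a j i
  have he : Injective (w ∘ e) := fun r r' h => huinj <| funext fun i => by
    rw [hκ r i, hκ r' i, Nat.cast_injective (congrFun h i)]
  have he_val {r r'} (h : r ≠ r') : (e r' : ℕ) ≠ μ + κ r := fun h' =>
    h (he.of_comp (Fin.ext h')).symm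
  refine congrFun <| eq_zero_of_sum_eq_zero_of_relations w (Fin.last _) (by simp [w, aplus]) e he l
    (fun r => (hl r).1) (fun j hj => ?_)
    (fun r r' h => (hl r).2.2.2 (e r') (by simp [e]) (he_val h)) hsum
  by_cases hjμ : (j : ℕ) < μ
  · exact .inl fun r => (hl r).2.1 j hjμ
  · exact .inr fun r => (hl r).2.2.2 j hjμ fun h => hj ⟨r, Fin.ext h.symm⟩
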